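/- arXiv:2304.11353 — 2 statements merged into one kernel-verified Lean document; each statement's English description precedes it below -/
import Mathlib

section
/- Let N ≥ 1 and let f : Fin N → Fin N be a map (the dynamics of a Boolean or k-valued logical network in algebraic state space form). Let M be the transition matrix of f over ℕ, i.e. the N×N matrix with M i j = 1 if f j = i and M i j = 0 otherwise. For d ≥ 1 let N_d denote the number of cycles of f of length d, i.e. N_d = (card {x : Fin N | Function.minimalPeriod f x = d}) / d. Then for every s ≥ 1, the trace of M^s equals the sum over all divisors k of s of k · N_k; equivalently, N_1 = trace(M) and for s ≥ 2, s · N_s = trace(M^s) − Σ_{k a proper divisor of s} k · N_k. -/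
/-!
`M ^ s` is the transition matrix of `f^[s]`, so its trace counts the points with `f^[s] x = x`,
i.e. the points whose minimal period `k` divides `s`. The points of minimal period `k > 0` are
partitioned by their periodic orbits, each of which has exactly `k` elements; hence their number
is `k` times the number of cycles of length `k`.
-/

open Finset Function

namespace Cycle

variable {α : Type*} [DecidableEq α] {s : Cycle α} {a : α}

theorem mem_toFinset : a ∈ s.toFinset ↔ a ∈ s :=
  Quotient.inductionOn' s fun _ ↦ List.mem_toFinset

theorem card_toFinset_of_nodup (h : s.Nodup) : #s.toFinset = s.length := by
  induction s using Quotient.inductionOn'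
  exact List.toFinset_card_of_nodup h

end Cycle

namespace Function

variable {α : Type*} {f : α → α} {x y : α}

theorem periodicOrbit_eq_periodicOrbit_iff (hx : x ∈ periodicPts f) (hy : y ∈ periodicPts f) :
    periodicOrbit f y = periodicOrbit f x ↔ y ∈ periodicOrbit f x := by
  refine ⟨fun h ↦ h ▸ self_mem_periodicOrbit hy, fun h ↦ ?_⟩
  obtain ⟨n, rfl⟩ := (mem_periodicOrbit_iff hx).1 h
  exact periodicOrbit_apply_iterate_eq hx n

variable [Fintype α] [DecidableEq α]

theorem filter_periodicOrbit_eq (hx : x ∈ periodicPts f) :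
    ({y | minimalPeriod f y = minimalPeriod f x ∧ periodicOrbit f y = periodicOrbit f x} :
      Finset α) = (periodicOrbit f x).toFinset := by
  ext y
  rw [mem_filter, Cycle.mem_toFinset]
  constructor
  · rintro ⟨-, hk, h⟩
    have hy : y ∈ periodicPts f :=
      minimalPeriod_pos_iff_mem_periodicPts.1 (hk ▸ minimalPeriod_pos_of_mem_periodicPts hx)
    exact (periodicOrbit_eq_periodicOrbit_iff hx hy).1 h
  · intro h
    obtain ⟨n, rfl⟩ := (mem_periodicOrbit_iff hx).1 h
    exact ⟨mem_univ _, minimalPeriod_apply_iterate hx n, periodicOrbit_apply_iterate_eq hx n⟩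

theorem card_minimalPeriod_eq_mul {k : ℕ} (hk : 0 < k) :
    #{x | minimalPeriod f x = k} =
      k * #(image (periodicOrbit f) {x | minimalPeriod f x = k}) := by
  rw [card_eq_sum_card_image (periodicOrbit f), mul_comm, ← smul_eq_mul, ← sum_const]
  refine sum_congr rfl fun c hc ↦ ?_
  obtain ⟨x, hx, rfl⟩ := mem_image.1 hc
  have hxk : minimalPeriod f x = k := (mem_filter.1 hx).2
  have hxp : x ∈ periodicPts f := minimalPeriod_pos_iff_mem_periodicPts.1 (hxk ▸ hk)
  rw [filter_filter, ← hxk, filter_periodicOrbit_eq hxp,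
    Cycle.card_toFinset_of_nodup nodup_periodicOrbit, periodicOrbit_length]

theorem card_isPeriodicPt_eq_sum_card_minimalPeriod_eq (f : α → α) {n : ℕ} (hn : n ≠ 0) :
    #{x | IsPeriodicPt f n x} = ∑ k ∈ n.divisors, #{x | minimalPeriod f x = k} := by
  rw [card_eq_sum_card_fiberwise (f := minimalPeriod f) fun x hx ↦
    Nat.mem_divisors.2 ⟨(mem_filter.1 hx).2.minimalPeriod_dvd, hn⟩]
  refine sum_congr rfl fun k hk ↦ ?_
  rw [filter_filter]
  refine congrArg card (filter_congr fun x _ ↦ ?_)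
  rw [and_iff_right_iff_imp]
  rintro rfl
  exact isPeriodicPt_iff_minimalPeriod_dvd.2 (Nat.dvd_of_mem_divisors hk)

end Function

section TransitionMatrix

variable {α : Type*} [DecidableEq α]

def transitionMatrix (R : Type*) [Zero R] [One R] (f : α → α) : Matrix α α R :=
  Matrix.of fun i j ↦ if f j = i then 1 else 0

variable {R : Type*}

theorem transitionMatrix_apply [Zero R] [One R] (f : α → α) (i j : α) :
    transitionMatrix R f i j = if f j = i then 1 else 0 := rfl

theorem transitionMatrix_id [Zero R] [One R] : transitionMatrix R (id : α → α) = 1 := by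
  ext i j
  simp [transitionMatrix_apply, Matrix.one_apply, eq_comm]

variable [Fintype α]

theorem transitionMatrix_mul [NonAssocSemiring R] (f g : α → α) :
    transitionMatrix R f * transitionMatrix R g = transitionMatrix R (f ∘ g) := by
  ext i j
  simp [Matrix.mul_apply, transitionMatrix_apply]

theorem transitionMatrix_pow [Semiring R] (f : α → α) (n : ℕ) :
    transitionMatrix R f ^ n = transitionMatrix R f^[n] := by
  induction n with
  | zero => exact transitionMatrix_id.symm
  | succ n ih => rw [pow_succ, ih, transitionMatrix_mul, iterate_succ]

theorem trace_transitionMatrix [AddCommMonoidWithOne R] (f : α → α) :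
    (transitionMatrix R f).trace = #{x | IsFixedPt f x} := by
  simp [Matrix.trace, transitionMatrix_apply, sum_boole, IsFixedPt]

theorem trace_transitionMatrix_pow [Semiring R] (f : α → α) (n : ℕ) :
    (transitionMatrix R f ^ n).trace = #{x | IsPeriodicPt f n x} := by
  rw [transitionMatrix_pow, trace_transitionMatrix]
  rfl

end TransitionMatrix

theorem trace_pow_eq_sum_divisors_mul_numCycles_general
    (N : ℕ) (f : Fin N → Fin N)
    (M : Matrix (Fin N) (Fin N) ℕ)
    (hM : ∀ i j, M i j = if f j = i then 1 else 0) :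
    ∀ s : ℕ, 1 ≤ s →
      Matrix.trace (M ^ s) =
        ∑ k ∈ s.divisors,
          k * (Fintype.card {x : Fin N // Function.minimalPeriod f x = k} / k) := by
  intro s hs
  obtain rfl : M = transitionMatrix ℕ f := Matrix.ext hM
  rw [trace_transitionMatrix_pow, Nat.cast_id,
    card_isPeriodicPt_eq_sum_card_minimalPeriod_eq f (by omega)]
  refine sum_congr rfl fun k hk ↦ ?_
  have hk_pos : 0 < k := Nat.pos_of_mem_divisors hk
  rw [Fintype.card_subtype, card_minimalPeriod_eq_mul hk_pos, Nat.mul_div_cancel_left _ hk_pos]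

/-- Formula (1.3): for a logical network `f : Fin N → Fin N` with transition matrix `M`
(`M i j = 1` iff `f j = i`), the trace of `M^s` equals `∑_{k ∣ s} k · N_k`, where
`N_k = (card {x | minimalPeriod f x = k}) / k` is the number of cycles of length `k`. -/
theorem trace_pow_eq_sum_divisors_mul_numCycles
    (N : ℕ) (hN : 1 ≤ N) (f : Fin N → Fin N)
    (M : Matrix (Fin N) (Fin N) ℕ)
    (hM : ∀ i j, M i j = if f j = i then 1 else 0) :
    ∀ s : ℕ, 1 ≤ s →
      Matrix.trace (M ^ s) =
        ∑ k ∈ s.divisors,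
          k * (Fintype.card {x : Fin N // Function.minimalPeriod f x = k} / k) :=
  trace_pow_eq_sum_divisors_mul_numCycles_general N f M hM
end

section
/- Let n, m, p ≥ 1, let f : Fin m → Fin n → Fin n be a deterministic transition map and h : Fin n → Fin p an output map. Let H be the p×n matrix over ℕ with H y x = 1 if h x = y and 0 otherwise, and for each control u let M_u be the n×n matrix over ℕ with (M_u) x' x = 1 if f u x = x' and 0 otherwise. Then the transition relation of the simulation is realized by the matrix product H · M_u · Hᵀ: for all u : Fin m and y y' : Fin p, (H * M_u * Hᵀ) y' y > 0 if and only if ∃ x : Fin n, h x = y ∧ h (f u x) = y'. -/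
theorem Matrix.mul_apply_ne_zero_iff {R l m n : Type*} [NonUnitalNonAssocSemiring R]
    [PartialOrder R] [CanonicallyOrderedAdd R] [NoZeroDivisors R] [Fintype m]
    (A : Matrix l m R) (B : Matrix m n R) (i : l) (j : n) :
    (A * B) i j ≠ 0 ↔ ∃ k, A i k ≠ 0 ∧ B k j ≠ 0 := by
  simp [Matrix.mul_apply, Finset.sum_eq_zero_iff]

theorem simulation_matrix_pos_iff_general
    (n m p : ℕ)
    (f : Fin m → Fin n → Fin n) (h : Fin n → Fin p)
    (H : Matrix (Fin p) (Fin n) ℕ)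
    (hH : ∀ y x, H y x = if h x = y then 1 else 0)
    (M : Fin m → Matrix (Fin n) (Fin n) ℕ)
    (hM : ∀ u x' x, M u x' x = if f u x = x' then 1 else 0) :
    ∀ (u : Fin m) (y y' : Fin p),
      0 < (H * M u * H.transpose) y' y ↔ ∃ x : Fin n, h x = y ∧ h (f u x) = y' := by
  intro u y y'
  simp only [pos_iff_ne_zero, Matrix.mul_apply_ne_zero_iff, Matrix.transpose_apply, hH, hM,
    ne_eq, ite_eq_right_iff, one_ne_zero, imp_false, not_not, exists_eq_right']
  exact exists_congr fun x => and_comm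

/-- The transition relation of the simulation is realized by `H * M_u * Hᵀ`: the entry
`(H * M_u * Hᵀ) y' y` is positive iff some state `x` with output `y` is steered by
control `u` to a state with output `y'`. -/
theorem simulation_matrix_pos_iff
    (n m p : ℕ) (hn : 1 ≤ n) (hm : 1 ≤ m) (hp : 1 ≤ p)
    (f : Fin m → Fin n → Fin n) (h : Fin n → Fin p)
    (H : Matrix (Fin p) (Fin n) ℕ)
    (hH : ∀ y x, H y x = if h x = y then 1 else 0)
    (M : Fin m → Matrix (Fin n) (Fin n) ℕ)
    (hM : ∀ u x' x, M u x' x = if f u x = x' then 1 else 0) :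
    ∀ (u : Fin m) (y y' : Fin p),
      0 < (H * M u * H.transpose) y' y ↔ ∃ x : Fin n, h x = y ∧ h (f u x) = y' :=
  simulation_matrix_pos_iff_general n m p f h H hH M hM
end
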